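/- In any 2-qBMG, there is no chordless 6-cycle v1v2v3v4v5v6v1 in the underlying undirected graph; equivalently, any six vertices inducing a cycle with the only adjacencies being consecutive pairs and v6v1 cannot occur. -/

import Mathlib

/-!
Orient each edge of the cycle forwards or backwards. By (N2), or by (N1) applied to the two
ends, a directed path of length two that is part of a path of length three forces its ends,
which are antipodal on the cycle, to be adjacent. Hence the orientations alternate, so the
cycle has a vertex with two in-neighbours on it, and (N3) applied to these two in-neighbours
again produces an antipodal chord.
-/

def QN1 {V : Type*} (E : V → V → Prop) : Prop :=
  ∀ u v, u ≠ v → ¬ E u v → ¬ E v u → ¬ ∃ w t, E u t ∧ E v w ∧ E t w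

def QN2 {V : Type*} (E : V → V → Prop) : Prop :=
  ∀ u v w t, E u v → E v w → E w t → E u t

def QN3 {V : Type*} (E : V → V → Prop) : Prop :=
  ∀ u v, (∃ w, E u w ∧ E v w) → (∀ w, E u w → E v w) ∨ (∀ w, E v w → E u w)

def QBip {V : Type*} (c : V → Bool) (E : V → V → Prop) : Prop :=
  ∀ u v, E u v → c u ≠ c v

/-- A 2-colored quasi best match graph: bipartite digraph satisfying (N1), (N2), (N3). -/
def IsQBMG {V : Type*} (c : V → Bool) (E : V → V → Prop) : Prop :=
  QBip c E ∧ QN1 E ∧ QN2 E ∧ QN3 E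

/-- Adjacency in the underlying undirected graph. -/
def QAdj {V : Type*} (E : V → V → Prop) (u v : V) : Prop := E u v ∨ E v u

section

variable {V : Type*} {E : V → V → Prop}

theorem QAdj.symm {u v : V} (huv : QAdj E u v) : QAdj E v u :=
  Or.symm huv

theorem QAdj.of_path (h1 : QN1 E) (h2 : QN2 E) {u a b w : V} (huw : u ≠ w)
    (hua : E u a) (hab : E a b) (hbw : QAdj E b w) : QAdj E u w := by
  rcases hbw with hbw | hwb
  · exact Or.inl (h2 _ _ _ _ hua hab hbw)
  · by_contra hn
    exact h1 u w huw (fun e => hn (Or.inl e)) (fun e => hn (Or.inr e)) ⟨b, a, hua, hwb, hab⟩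

theorem QN3.out_or_out (h3 : QN3 E) {a b c x y : V} (hab : E a b) (hcb : E c b)
    (hax : E a x) (hcy : E c y) : E c x ∨ E a y :=
  (h3 a c ⟨b, hab, hcb⟩).imp (· x hax) (· y hcy)

section Hexagon

variable {v : Fin 6 → V}
  (hadj : ∀ i, QAdj E (v i) (v (i + 1)))
  (hne : ∀ i, v i ≠ v (i + 3))
  (hanti : ∀ i, ¬ QAdj E (v i) (v (i + 3)))
include hadj hne hanti

theorem hexagon_forward_iff_not_forward_succ (h1 : QN1 E) (h2 : QN2 E) (i : Fin 6) :
    E (v i) (v (i + 1)) ↔ ¬ E (v (i + 1)) (v (i + 2)) := by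
  constructor
  · intro hf hf'
    have hlast : QAdj E (v (i + 2)) (v (i + 3)) := by
      simpa [show i + 2 + 1 = i + 3 by grind] using hadj (i + 2)
    exact hanti i (QAdj.of_path h1 h2 (hne i) hf hf' hlast)
  · intro hnf'
    by_contra hnf
    have hb : E (v (i + 1)) (v i) := (hadj i).resolve_left hnf
    have hb' : E (v (i + 2)) (v (i + 1)) := by
      rw [show i + 2 = i + 1 + 1 by grind] at hnf' ⊢
      exact (hadj (i + 1)).resolve_left hnf'
    have hfirst : QAdj E (v i) (v (i + 5)) := by
      simpa [show i + 5 + 1 = i by grind] using (hadj (i + 5)).symm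
    have hne' : v (i + 2) ≠ v (i + 5) := by
      simpa [show i + 2 + 3 = i + 5 by grind] using hne (i + 2)
    have hanti' : ¬ QAdj E (v (i + 2)) (v (i + 5)) := by
      simpa [show i + 2 + 3 = i + 5 by grind] using hanti (i + 2)
    exact hanti' (QAdj.of_path h1 h2 hne' hb' hb hfirst)

theorem false_of_hexagon_antipodes_not_qadj (h1 : QN1 E) (h2 : QN2 E) (h3 : QN3 E) : False := by
  have alt := hexagon_forward_iff_not_forward_succ hadj hne hanti h1 h2
  have a0 := alt 0; have a1 := alt 1; have a4 := alt 4; have a5 := alt 5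
  simp only [Fin.isValue, Fin.reduceAdd] at a0 a1 a4 a5
  have back (i : Fin 6) : ¬ E (v i) (v (i + 1)) → E (v (i + 1)) (v i) := (hadj i).resolve_left
  by_cases h01 : E (v 0) (v 1)
  · have h21 : E (v 2) (v 1) := back 1 (a0.1 h01)
    have h23 : E (v 2) (v 3) := a1.not_left.1 (a0.1 h01)
    have h05 : E (v 0) (v 5) := back 5 fun h50 => a5.1 h50 h01
    rcases h3.out_or_out h01 h21 h05 h23 with h25 | h03
    · exact hanti 2 (Or.inl h25)
    · exact hanti 0 (Or.inl h03)
  · have h10 : E (v 1) (v 0) := back 0 h01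
    have h50 : E (v 5) (v 0) := a5.2 h01
    have h12 : E (v 1) (v 2) := a0.not_left.1 h01
    have h54 : E (v 5) (v 4) := back 4 fun h45 => a4.1 h45 h50
    rcases h3.out_or_out h10 h50 h12 h54 with h52 | h14
    · exact hanti 2 (Or.inr h52)
    · exact hanti 1 (Or.inl h14)

end Hexagon

end

theorem no_chordless_C6_general {V : Type*} (c : V → Bool) (E : V → V → Prop)
    (h : IsQBMG c E) (v1 v2 v3 v4 v5 v6 : V)
    (hne : [v1, v2, v3, v4, v5, v6].Pairwise (· ≠ ·))
    (a12 : QAdj E v1 v2) (a23 : QAdj E v2 v3) (a34 : QAdj E v3 v4)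
    (a45 : QAdj E v4 v5) (a56 : QAdj E v5 v6) (a61 : QAdj E v6 v1)
    (n14 : ¬ QAdj E v1 v4) (n25 : ¬ QAdj E v2 v5) (n36 : ¬ QAdj E v3 v6) :
    False := by
  obtain ⟨-, h1, h2, h3⟩ := h
  simp only [List.pairwise_cons, List.forall_mem_cons, List.not_mem_nil, IsEmpty.forall_iff,
    implies_true, List.Pairwise.nil, and_true] at hne
  obtain ⟨⟨-, -, h14, -, -⟩, ⟨-, -, h25, -⟩, ⟨-, -, h36⟩, -⟩ := hne
  refine false_of_hexagon_antipodes_not_qadj (v := ![v1, v2, v3, v4, v5, v6]) ?_ ?_ ?_ h1 h2 h3 <;> intro i <;>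
    fin_cases i
  exacts [a12, a23, a34, a45, a56, a61, h14, h25, h36, h14.symm, h25.symm, h36.symm,
    n14, n25, n36, fun h => n14 h.symm, fun h => n25 h.symm, fun h => n36 h.symm]

theorem no_chordless_C6 {V : Type*} (c : V → Bool) (E : V → V → Prop)
    (h : IsQBMG c E) (v1 v2 v3 v4 v5 v6 : V)
    (hne : [v1, v2, v3, v4, v5, v6].Pairwise (· ≠ ·))
    (a12 : QAdj E v1 v2) (a23 : QAdj E v2 v3) (a34 : QAdj E v3 v4)
    (a45 : QAdj E v4 v5) (a56 : QAdj E v5 v6) (a61 : QAdj E v6 v1)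
    (n13 : ¬ QAdj E v1 v3) (n14 : ¬ QAdj E v1 v4) (n15 : ¬ QAdj E v1 v5)
    (n24 : ¬ QAdj E v2 v4) (n25 : ¬ QAdj E v2 v5) (n26 : ¬ QAdj E v2 v6)
    (n35 : ¬ QAdj E v3 v5) (n36 : ¬ QAdj E v3 v6) (n46 : ¬ QAdj E v4 v6) :
    False :=
  no_chordless_C6_general c E h v1 v2 v3 v4 v5 v6 hne a12 a23 a34 a45 a56 a61 n14 n25 n36
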